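/- The elements G₊ = E_{1−2} − I¹ and G₋ = E_{2−1} − I² e^{−σ_{1+2}} commute with all generators of the subalgebra so(M−4) ⊂ so(M) (the subalgebra whose roots are orthogonal to both e₁ and e₂), i.e., [G_±, U(so(M−4))] = 0. -/

import Mathlib

open Matrix

noncomputable section

/-- The matrix unit `E_{i,j}`, with 1-based indices. -/
def Eu (M i j : ℕ) : Matrix (Fin M) (Fin M) ℂ :=
  Matrix.of fun k l => if k.1 + 1 = i ∧ l.1 + 1 = j then 1 else 0

/-- The antisymmetric matrix unit `M_{a,b} = E_{a,b} - E_{b,a}` (1-based indices). -/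
def MU (M a b : ℕ) : Matrix (Fin M) (Fin M) ℂ := Eu M a b - Eu M b a

/-- The root vector `E_{i+j}` of `so(M)`. -/
def Epp (M i j : ℕ) : Matrix (Fin M) (Fin M) ℂ :=
  (1 / 2 : ℂ) • (-(MU M (2 * i) (2 * j)) + Complex.I • MU M (2 * i) (2 * j - 1)
    + Complex.I • MU M (2 * i - 1) (2 * j) + MU M (2 * i - 1) (2 * j - 1))

/-- The root vector `E_{i-j}` of `so(M)`. -/
def Epm (M i j : ℕ) : Matrix (Fin M) (Fin M) ℂ :=
  (1 / 2 : ℂ) • (-(MU M (2 * i) (2 * j)) - Complex.I • MU M (2 * i) (2 * j - 1)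
    + Complex.I • MU M (2 * i - 1) (2 * j) - MU M (2 * i - 1) (2 * j - 1))

/-- The root vector `E_{-i+j}` of `so(M)`. -/
def Emp (M i j : ℕ) : Matrix (Fin M) (Fin M) ℂ :=
  (1 / 2 : ℂ) • (MU M (2 * i) (2 * j) - Complex.I • MU M (2 * i) (2 * j - 1)
    + Complex.I • MU M (2 * i - 1) (2 * j) + MU M (2 * i - 1) (2 * j - 1))

/-- The short root vector `E_{+k}` of `so(2N+1)` (here `M = 2N+1`). -/
def Es (M k : ℕ) : Matrix (Fin M) (Fin M) ℂ :=
  ((Real.sqrt 2 : ℂ))⁻¹ • (MU M (2 * k) M - Complex.I • MU M (2 * k - 1) M)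

/-- The Cartan generator `H_j = (-i/2) M_{2j-1,2j}`. -/
def Hc (M j : ℕ) : Matrix (Fin M) (Fin M) ℂ :=
  (-(Complex.I) / 2) • MU M (2 * j - 1) (2 * j)

/-- The quadratic invariant `I^a` in (a completion of) `U(so(M))`:
`(1/2)E_a² + Σ_{l=3}^N E_{a+l}E_{a-l}` for `M = 2N+1` and `Σ_{l=3}^N E_{a+l}E_{a-l}`
for `M = 2N`, realized through a representation `ρ`. -/
def Ia (M N : ℕ) {A : Type*} [Ring A] [Algebra ℂ A]
    (ρ : Matrix (Fin M) (Fin M) ℂ →ₗ[ℂ] A) (a : ℕ) : A :=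
  (if M % 2 = 1 then (1 / 2 : ℂ) • (ρ (Es M a) * ρ (Es M a)) else 0)
    + ∑ l ∈ Finset.Icc 3 N, ρ (Epp M a l) * ρ (Epm M a l)

lemma Eu_mul (M i j k l : ℕ) (h1 : 1 ≤ j) (h2 : j ≤ M) :
    Eu M i j * Eu M k l = if j = k then Eu M i l else 0 := by
  ext p q
  rw [Matrix.mul_apply]
  rw [Finset.sum_eq_single (⟨j - 1, by omega⟩ : Fin M)]
  · simp only [Eu, of_apply]
    have hj : j - 1 + 1 = j := by omega
    simp only [hj]
    by_cases hjk : j = k <;> by_cases hpi : p.1 + 1 = i <;> by_cases hql : q.1 + 1 = l <;>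
      simp [hjk, hpi, hql, Matrix.zero_apply]
  · intro m _ hm
    have : ¬ (m.1 + 1 = j) := by
      intro h; apply hm; apply Fin.ext; simp; omega
    simp [Eu, this]
  · simp

lemma MU_bracket (M a b c d : ℕ) (ha1 : 1 ≤ a) (ha2 : a ≤ M) (hb1 : 1 ≤ b) (hb2 : b ≤ M)
    (hc1 : 1 ≤ c) (hc2 : c ≤ M) (hd1 : 1 ≤ d) (hd2 : d ≤ M) :
    MU M a b * MU M c d - MU M c d * MU M a b =
      (if b = c then MU M a d else 0) + (if a = d then MU M b c else 0)
      - (if b = d then MU M a c else 0) - (if a = c then MU M b d else 0) := by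
  simp only [MU, sub_mul, mul_sub]
  rw [Eu_mul M a b c d hb1 hb2, Eu_mul M a b d c hb1 hb2, Eu_mul M b a c d ha1 ha2,
    Eu_mul M b a d c ha1 ha2, Eu_mul M c d a b hd1 hd2, Eu_mul M c d b a hd1 hd2,
    Eu_mul M d c a b hc1 hc2, Eu_mul M d c b a hc1 hc2]
  by_cases h1 : b = c <;> by_cases h2 : a = d <;> by_cases h3 : b = d <;> by_cases h4 : a = c <;>
    by_cases h5 : c = d <;>
    simp [h1, h2, h3, h4, h5, eq_comm] <;> abel

/-- auxiliary isotropic vector -/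
def Fv (M k c : ℕ) : Matrix (Fin M) (Fin M) ℂ :=
  (1 / 2 : ℂ) • (MU M k c + Complex.I • MU M (k + 1) c)

lemma MU_comm_small (M a b k c : ℕ) (ha1 : 5 ≤ a) (ha2 : a ≤ M) (hb1 : 5 ≤ b) (hb2 : b ≤ M)
    (hk1 : 1 ≤ k) (hk2 : k ≤ 4) (hc1 : 1 ≤ c) (hc2 : c ≤ 4) :
    MU M a b * MU M k c = MU M k c * MU M a b := by
  have h := MU_bracket M a b k c (by omega) ha2 (by omega) hb2 hk1 (by omega) hc1 (by omega)
  rw [if_neg (show ¬ b = k by omega), if_neg (show ¬ a = c by omega),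
    if_neg (show ¬ b = c by omega), if_neg (show ¬ a = k by omega)] at h
  have h2 : MU M a b * MU M k c - MU M k c * MU M a b = 0 := by rw [h]; abel
  linear_combination (norm := abel) h2

lemma MU_Fv_bracket (M a b k c : ℕ) (ha1 : 5 ≤ a) (ha2 : a ≤ M) (hb1 : 5 ≤ b) (hb2 : b ≤ M)
    (hk1 : 1 ≤ k) (hk2 : k + 1 ≤ 4) (hc1 : 5 ≤ c) (hc2 : c ≤ M) :
    MU M a b * Fv M k c - Fv M k c * MU M a b =
      (if c = b then Fv M k a else 0) - (if c = a then Fv M k b else 0) := by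
  have h1 := MU_bracket M a b k c (by omega) ha2 (by omega) hb2 (by omega) (by omega)
    (by omega) hc2
  have h2 := MU_bracket M a b (k + 1) c (by omega) ha2 (by omega) hb2 (by omega) (by omega)
    (by omega) hc2
  rw [if_neg (show ¬ b = k by omega), if_neg (show ¬ a = k by omega)] at h1
  rw [if_neg (show ¬ b = k + 1 by omega), if_neg (show ¬ a = k + 1 by omega)] at h2
  have expand : MU M a b * Fv M k c - Fv M k c * MU M a b =
      (1 / 2 : ℂ) • ((MU M a b * MU M k c - MU M k c * MU M a b)
        + Complex.I • (MU M a b * MU M (k + 1) c - MU M (k + 1) c * MU M a b)) := by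
    simp only [Fv, Matrix.mul_smul, Matrix.smul_mul, Matrix.mul_add, Matrix.add_mul]
    match_scalars <;> simp [Complex.ext_iff] <;> ring
  rw [expand, h1, h2]
  split_ifs <;> first
    | (exfalso; omega)
    | (simp; done)
    | (simp only [Fv, MU]; match_scalars <;> simp [Complex.ext_iff] <;> ring)

lemma Fv_comm (M k c c' : ℕ) (hk1 : 1 ≤ k) (hk2 : k + 1 ≤ 4) (hc : 5 ≤ c) (hcM : c ≤ M)
    (hc' : 5 ≤ c') (hcM' : c' ≤ M) (hne : c ≠ c') :
    Fv M k c * Fv M k c' = Fv M k c' * Fv M k c := by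
  have h1 := MU_bracket M k c k c' hk1 (by omega) (by omega) hcM hk1 (by omega) (by omega) hcM'
  have h4 := MU_bracket M (k + 1) c (k + 1) c' (by omega) (by omega) (by omega) hcM (by omega)
    (by omega) (by omega) hcM'
  have h2 := MU_bracket M k c (k + 1) c' hk1 (by omega) (by omega) hcM (by omega) (by omega) (by omega) hcM'
  have h3 := MU_bracket M (k + 1) c k c' (by omega) (by omega) (by omega) hcM hk1 (by omega) (by omega) hcM'
  rw [if_neg (show ¬ c = k by omega), if_neg (show ¬ k = c' by omega),
    if_neg (show ¬ c = c' by omega), if_pos (rfl : k = k)] at h1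
  rw [if_neg (show ¬ c = k + 1 by omega), if_neg (show ¬ k + 1 = c' by omega),
    if_neg (show ¬ c = c' by omega), if_pos (rfl : k + 1 = k + 1)] at h4
  rw [if_neg (show ¬ c = k + 1 by omega), if_neg (show ¬ k = c' by omega),
    if_neg (show ¬ c = c' by omega), if_neg (show ¬ k = k + 1 by omega)] at h2
  rw [if_neg (show ¬ c = k by omega), if_neg (show ¬ k + 1 = c' by omega),
    if_neg (show ¬ c = c' by omega), if_neg (show ¬ k + 1 = k by omega)] at h3
  have expand : Fv M k c * Fv M k c' - Fv M k c' * Fv M k c =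
      (1 / 4 : ℂ) • ((MU M k c * MU M k c' - MU M k c' * MU M k c)
        - (MU M (k + 1) c * MU M (k + 1) c' - MU M (k + 1) c' * MU M (k + 1) c))
      + ((1 / 4) * Complex.I) • ((MU M k c * MU M (k + 1) c' - MU M (k + 1) c' * MU M k c)
        + (MU M (k + 1) c * MU M k c' - MU M k c' * MU M (k + 1) c)) := by
    simp only [Fv, Matrix.mul_smul, Matrix.smul_mul, Matrix.mul_add, Matrix.add_mul]
    match_scalars <;> simp [Complex.ext_iff] <;> ring
  have hz : Fv M k c * Fv M k c' - Fv M k c' * Fv M k c = 0 := by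
    rw [expand, h1, h4, h2, h3]
    simp
  linear_combination (norm := abel) hz

lemma Epp_eq (M t l : ℕ) (ht : 1 ≤ t) :
    Epp M t l = Fv M (2 * t - 1) (2 * l - 1) + Complex.I • Fv M (2 * t - 1) (2 * l) := by
  have h : 2 * t - 1 + 1 = 2 * t := by omega
  simp only [Epp, Fv, h]
  match_scalars <;> simp [Complex.ext_iff] <;> ring

lemma Epm_eq (M t l : ℕ) (ht : 1 ≤ t) :
    Epm M t l = -Fv M (2 * t - 1) (2 * l - 1) + Complex.I • Fv M (2 * t - 1) (2 * l) := by
  have h : 2 * t - 1 + 1 = 2 * t := by omega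
  simp only [Epm, Fv, h]
  match_scalars <;> simp [Complex.ext_iff] <;> ring

lemma Es_eq (M t : ℕ) (ht : 1 ≤ t) :
    Es M t = (-(Complex.I) * (Real.sqrt 2 : ℂ)) • Fv M (2 * t - 1) M := by
  have h : 2 * t - 1 + 1 = 2 * t := by omega
  have h2 : ((Real.sqrt 2 : ℝ) : ℂ) ≠ 0 := by
    simp [Real.sqrt_eq_zero']
  have h3 : ((Real.sqrt 2 : ℝ) : ℂ) * ((Real.sqrt 2 : ℝ) : ℂ) = 2 := by
    rw [← Complex.ofReal_mul, Real.mul_self_sqrt (by norm_num)]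
    norm_num
  simp only [Es, Fv, h]
  match_scalars <;> field_simp <;>
    first
      | linear_combination ((Real.sqrt 2 : ℝ) : ℂ) ^ 2 * Complex.I_sq - h3
      | linear_combination (-Complex.I) * h3
      | linear_combination h3
      | ring

lemma sum_pair {β : Type*} [AddCommMonoid β] (f : ℕ → β) (n : ℕ) :
    ∑ l ∈ Finset.Icc 3 n, (f (2 * l - 1) + f (2 * l)) = ∑ c ∈ Finset.Icc 5 (2 * n), f c := by
  induction n with
  | zero => simp
  | succ n ih =>
    rcases Nat.lt_or_ge n 2 with h | h
    · interval_cases n <;> simp [Finset.Icc_eq_empty_of_lt]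
    · rw [Finset.sum_Icc_succ_top (by omega), ih]
      have e : 2 * (n + 1) = (2 * n + 1) + 1 := by ring
      rw [e, Finset.sum_Icc_succ_top (by omega), Finset.sum_Icc_succ_top (by omega)]
      have h1 : 2 * n + 1 + 1 - 1 = 2 * n + 1 := by omega
      rw [h1]
      abel


/-- the deformed elements `G₊ = E_{1-2} - I¹` and `G₋ = E_{2-1} - I² e^{-σ_{1+2}}`
commute with all generators of the subalgebra `so(M-4) ⊂ so(M)` (the subalgebra whose roots are
orthogonal to both `e₁` and `e₂`, realized by the antisymmetric matrix units `M_{a,b}` with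
`a, b ≥ 5`). Here `e^{-σ_{1+2}} = (1 + E_{1+2})⁻¹` is realized by an element `u` inverse to
`1 + E_{1+2}`. -/
theorem deformed_generators_commute_with_soM4
    (N M : ℕ) (hN : 2 ≤ N) (hM : M = 2 * N + 1 ∨ M = 2 * N)
    (A : Type*) [Ring A] [Algebra ℂ A]
    (ρ : Matrix (Fin M) (Fin M) ℂ →ₗ[ℂ] A)
    (hρ : ∀ x y : Matrix (Fin M) (Fin M) ℂ, ρ (x * y - y * x) = ρ x * ρ y - ρ y * ρ x)
    (u : A)
    (hu : u * (1 + ρ (Epp M 1 2)) = 1) (hu' : (1 + ρ (Epp M 1 2)) * u = 1) :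
    let Gp : A := ρ (Epm M 1 2) - Ia M N ρ 1
    let Gm : A := ρ (Emp M 1 2) - Ia M N ρ 2 * u
    ∀ a b : ℕ, 5 ≤ a → a ≤ M → 5 ≤ b → b ≤ M →
      ρ (MU M a b) * Gp = Gp * ρ (MU M a b) ∧
      ρ (MU M a b) * Gm = Gm * ρ (MU M a b) := by
  intro Gp Gm a b ha haM hb hbM
  have hM5 : 5 ≤ M := le_trans ha haM
  have hMN : 2 * N ≤ M := by rcases hM with h | h <;> omega
  have cm : ∀ x y : Matrix (Fin M) (Fin M) ℂ, x * y = y * x → ρ x * ρ y = ρ y * ρ x := by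
    intro x y h
    have h2 := hρ x y
    rw [h, sub_self, map_zero] at h2
    exact sub_eq_zero.mp h2.symm
  have hsmall : ∀ k c : ℕ, 1 ≤ k → k ≤ 4 → 1 ≤ c → c ≤ 4 →
      MU M a b * MU M k c = MU M k c * MU M a b :=
    fun k c h1 h2 h3 h4 => MU_comm_small M a b k c ha haM hb hbM h1 h2 h3 h4
  have c13 := hsmall 1 3 (by norm_num) (by norm_num) (by norm_num) (by norm_num)
  have c14 := hsmall 1 4 (by norm_num) (by norm_num) (by norm_num) (by norm_num)
  have c23 := hsmall 2 3 (by norm_num) (by norm_num) (by norm_num) (by norm_num)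
  have c24 := hsmall 2 4 (by norm_num) (by norm_num) (by norm_num) (by norm_num)
  have hEpp : MU M a b * Epp M 1 2 = Epp M 1 2 * MU M a b := by
    simp only [Epp]
    norm_num
    simp only [Matrix.mul_smul, Matrix.smul_mul, Matrix.mul_add, Matrix.add_mul,
      Matrix.mul_sub, Matrix.sub_mul, Matrix.mul_neg, Matrix.neg_mul, c13, c14, c23, c24]
  have hEpm : MU M a b * Epm M 1 2 = Epm M 1 2 * MU M a b := by
    simp only [Epm]
    norm_num
    simp only [Matrix.mul_smul, Matrix.smul_mul, Matrix.mul_add, Matrix.add_mul,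
      Matrix.mul_sub, Matrix.sub_mul, Matrix.mul_neg, Matrix.neg_mul, c13, c14, c23, c24]
  have hEmp : MU M a b * Emp M 1 2 = Emp M 1 2 * MU M a b := by
    simp only [Emp]
    norm_num
    simp only [Matrix.mul_smul, Matrix.smul_mul, Matrix.mul_add, Matrix.add_mul,
      Matrix.mul_sub, Matrix.sub_mul, Matrix.mul_neg, Matrix.neg_mul, c13, c14, c23, c24]
  have hS : ∀ k : ℕ, 1 ≤ k → k + 1 ≤ 4 →
      ρ (MU M a b) * (∑ c ∈ Finset.Icc 5 M, ρ (Fv M k c) * ρ (Fv M k c)) =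
      (∑ c ∈ Finset.Icc 5 M, ρ (Fv M k c) * ρ (Fv M k c)) * ρ (MU M a b) := by
    intro k hk1 hk2
    have hD : ∀ c, 5 ≤ c → c ≤ M →
        ρ (MU M a b) * ρ (Fv M k c) - ρ (Fv M k c) * ρ (MU M a b) =
          (if c = b then ρ (Fv M k a) else 0) - (if c = a then ρ (Fv M k b) else 0) := by
      intro c h5 hcM
      have h := hρ (MU M a b) (Fv M k c)
      rw [MU_Fv_bracket M a b k c ha haM hb hbM hk1 hk2 h5 hcM, map_sub, apply_ite ρ,
        apply_ite ρ, map_zero] at h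
      exact h.symm
    rw [Finset.mul_sum, Finset.sum_mul, ← sub_eq_zero, ← Finset.sum_sub_distrib]
    have step : ∀ c ∈ Finset.Icc 5 M,
        ρ (MU M a b) * (ρ (Fv M k c) * ρ (Fv M k c))
          - ρ (Fv M k c) * ρ (Fv M k c) * ρ (MU M a b)
          = (if c = b then ρ (Fv M k a) * ρ (Fv M k c) + ρ (Fv M k c) * ρ (Fv M k a) else 0)
            - (if c = a then ρ (Fv M k b) * ρ (Fv M k c) + ρ (Fv M k c) * ρ (Fv M k b)
                else 0) := by
      intro c hc
      simp only [Finset.mem_Icc] at hc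
      have e := hD c hc.1 hc.2
      have expand : ρ (MU M a b) * (ρ (Fv M k c) * ρ (Fv M k c))
          - ρ (Fv M k c) * ρ (Fv M k c) * ρ (MU M a b)
          = (ρ (MU M a b) * ρ (Fv M k c) - ρ (Fv M k c) * ρ (MU M a b)) * ρ (Fv M k c)
            + ρ (Fv M k c) * (ρ (MU M a b) * ρ (Fv M k c) - ρ (Fv M k c) * ρ (MU M a b)) := by
        noncomm_ring
      rw [expand, e]
      split_ifs <;> noncomm_ring
    rw [Finset.sum_congr rfl step, Finset.sum_sub_distrib,
      Finset.sum_ite_eq' (Finset.Icc 5 M) b, Finset.sum_ite_eq' (Finset.Icc 5 M) a,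
      if_pos (Finset.mem_Icc.mpr ⟨hb, hbM⟩), if_pos (Finset.mem_Icc.mpr ⟨ha, haM⟩)]
    abel
  have h3c : ((Real.sqrt 2 : ℝ) : ℂ) * ((Real.sqrt 2 : ℝ) : ℂ) = 2 := by
    rw [← Complex.ofReal_mul, Real.mul_self_sqrt (by norm_num)]
    norm_num
  have hIa : ∀ t : ℕ, 1 ≤ t → t ≤ 2 →
      Ia M N ρ t = -∑ c ∈ Finset.Icc 5 M, ρ (Fv M (2 * t - 1) c) * ρ (Fv M (2 * t - 1) c) := by
    intro t ht1 ht2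
    have hk1 : 1 ≤ 2 * t - 1 := by omega
    have hk2 : 2 * t - 1 + 1 ≤ 4 := by omega
    have hsum : ∑ l ∈ Finset.Icc 3 N, ρ (Epp M t l) * ρ (Epm M t l)
        = -∑ c ∈ Finset.Icc 5 (2 * N), ρ (Fv M (2 * t - 1) c) * ρ (Fv M (2 * t - 1) c) := by
      rw [← sum_pair (fun c => ρ (Fv M (2 * t - 1) c) * ρ (Fv M (2 * t - 1) c)) N,
        ← Finset.sum_neg_distrib]
      apply Finset.sum_congr rfl
      intro l hl
      simp only [Finset.mem_Icc] at hl
      have hcomm := cm _ _ (Fv_comm M (2 * t - 1) (2 * l - 1) (2 * l) hk1 hk2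
        (by omega) (by omega) (by omega) (by omega) (by omega))
      rw [Epp_eq M t l ht1, Epm_eq M t l ht1, map_add, map_add, map_neg, _root_.map_smul]
      set P := ρ (Fv M (2 * t - 1) (2 * l - 1)) with hP
      set Q := ρ (Fv M (2 * t - 1) (2 * l)) with hQ
      have expand : (P + Complex.I • Q) * (-P + Complex.I • Q)
          = (-(P * P) - Q * Q) + Complex.I • (P * Q) - Complex.I • (Q * P) := by
        simp only [add_mul, mul_add, mul_neg, neg_mul, smul_mul_assoc, mul_smul_comm, smul_smul]
        match_scalars <;> simp [Complex.ext_iff] <;> ring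
      rw [expand, hcomm]
      abel
    rcases hM with hMo | hMe
    · subst hMo
      have hmod : (2 * N + 1) % 2 = 1 := by omega
      simp only [Ia, if_pos hmod, hsum]
      rw [Es_eq (2 * N + 1) t ht1, _root_.map_smul]
      set F := ρ (Fv (2 * N + 1) (2 * t - 1) (2 * N + 1)) with hF
      have hcoef : (1 / 2 : ℂ) • (((-(Complex.I) * ((Real.sqrt 2 : ℝ) : ℂ)) • F)
          * ((-(Complex.I) * ((Real.sqrt 2 : ℝ) : ℂ)) • F)) = -(F * F) := by
        rw [smul_mul_assoc, mul_smul_comm, smul_smul, smul_smul]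
        have : (1 / 2 : ℂ) * (-(Complex.I) * ((Real.sqrt 2 : ℝ) : ℂ))
            * (-(Complex.I) * ((Real.sqrt 2 : ℝ) : ℂ)) = -1 := by
          linear_combination (1 / 2 * ((Real.sqrt 2 : ℝ) : ℂ) * ((Real.sqrt 2 : ℝ) : ℂ))
            * Complex.I_sq - (1 / 2) * h3c
        rw [this, neg_one_smul]
      rw [hcoef, Finset.sum_Icc_succ_top (show 5 ≤ 2 * N + 1 by omega)]
      abel
    · subst hMe
      have hmod : ¬ (2 * N % 2 = 1) := by omega
      simp only [Ia, if_neg hmod, hsum, zero_add]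
  have hXIa1 : ρ (MU M a b) * Ia M N ρ 1 = Ia M N ρ 1 * ρ (MU M a b) := by
    rw [hIa 1 (by norm_num) (by norm_num)]
    have e1 : (2 * 1 - 1 : ℕ) = 1 := by norm_num
    rw [e1, mul_neg, neg_mul, hS 1 (by norm_num) (by norm_num)]
  have hXIa2 : ρ (MU M a b) * Ia M N ρ 2 = Ia M N ρ 2 * ρ (MU M a b) := by
    rw [hIa 2 (by norm_num) (by norm_num)]
    have e1 : (2 * 2 - 1 : ℕ) = 3 := by norm_num
    rw [e1, mul_neg, neg_mul, hS 3 (by norm_num) (by norm_num)]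
  have hXu : ρ (MU M a b) * u = u * ρ (MU M a b) := by
    have h1 : ρ (MU M a b) * ρ (Epp M 1 2) = ρ (Epp M 1 2) * ρ (MU M a b) := cm _ _ hEpp
    have h2 : ρ (MU M a b) * (1 + ρ (Epp M 1 2)) = (1 + ρ (Epp M 1 2)) * ρ (MU M a b) := by
      rw [mul_add, add_mul, mul_one, one_mul, h1]
    calc ρ (MU M a b) * u = (u * (1 + ρ (Epp M 1 2))) * (ρ (MU M a b) * u) := by
          rw [hu, one_mul]
      _ = u * ((1 + ρ (Epp M 1 2)) * ρ (MU M a b)) * u := by noncomm_ring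
      _ = u * (ρ (MU M a b) * (1 + ρ (Epp M 1 2))) * u := by rw [h2]
      _ = (u * ρ (MU M a b)) * ((1 + ρ (Epp M 1 2)) * u) := by noncomm_ring
      _ = u * ρ (MU M a b) := by rw [hu', mul_one]
  constructor
  · show ρ (MU M a b) * (ρ (Epm M 1 2) - Ia M N ρ 1)
      = (ρ (Epm M 1 2) - Ia M N ρ 1) * ρ (MU M a b)
    rw [mul_sub, sub_mul, cm _ _ hEpm, hXIa1]
  · show ρ (MU M a b) * (ρ (Emp M 1 2) - Ia M N ρ 2 * u)
      = (ρ (Emp M 1 2) - Ia M N ρ 2 * u) * ρ (MU M a b)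
    rw [mul_sub, sub_mul, cm _ _ hEmp, ← mul_assoc, hXIa2, mul_assoc, hXu, ← mul_assoc]
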